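/- For all natural numbers m, n ≥ 0: hom(E_1^m, E_2^n) = 0, ext1(E_1^m, E_2^n) = n + m + 2, hom(E_2^n, E_1^m) = n + m, and ext1(E_2^n, E_1^m) = 0. -/

import Mathlib

noncomputable section

open Module

universe u

/-- A representation of the quiver `Q1` (vertices 1, 2, 3; arrows 1→3, 1→2, 2→3)
over the field `k`, with finite-dimensional vector spaces at the vertices. -/
structure RepQ1 (k : Type u) [Field k] where
  V1 : Type u
  V2 : Type u
  V3 : Type u
  [acg1 : AddCommGroup V1]
  [acg2 : AddCommGroup V2]
  [acg3 : AddCommGroup V3]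
  [mod1 : Module k V1]
  [mod2 : Module k V2]
  [mod3 : Module k V3]
  [fd1 : FiniteDimensional k V1]
  [fd2 : FiniteDimensional k V2]
  [fd3 : FiniteDimensional k V3]
  r13 : V1 →ₗ[k] V3
  r12 : V1 →ₗ[k] V2
  r23 : V2 →ₗ[k] V3

attribute [instance] RepQ1.acg1 RepQ1.acg2 RepQ1.acg3 RepQ1.mod1 RepQ1.mod2 RepQ1.mod3
  RepQ1.fd1 RepQ1.fd2 RepQ1.fd3

namespace RepQ1

variable {k : Type u} [Field k]

/-- The space of morphisms of representations `ρ → ρ'`: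
triples `(f₁, f₂, f₃)` of linear maps commuting with the structure maps. -/
def homSpace (ρ ρ' : RepQ1 k) :
    Submodule k ((ρ.V1 →ₗ[k] ρ'.V1) × (ρ.V2 →ₗ[k] ρ'.V2) × (ρ.V3 →ₗ[k] ρ'.V3)) where
  carrier := { f | f.2.2 ∘ₗ ρ.r13 = ρ'.r13 ∘ₗ f.1 ∧
                   f.2.1 ∘ₗ ρ.r12 = ρ'.r12 ∘ₗ f.1 ∧
                   f.2.2 ∘ₗ ρ.r23 = ρ'.r23 ∘ₗ f.2.1 }
  add_mem' := by
    rintro f g ⟨h1, h2, h3⟩ ⟨h1', h2', h3'⟩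
    refine ⟨?_, ?_, ?_⟩ <;>
      simp only [Prod.fst_add, Prod.snd_add, LinearMap.add_comp, LinearMap.comp_add,
        h1, h2, h3, h1', h2', h3']
  zero_mem' := by
    refine ⟨?_, ?_, ?_⟩ <;> simp
  smul_mem' := by
    rintro c f ⟨h1, h2, h3⟩
    refine ⟨?_, ?_, ?_⟩ <;>
      simp only [Prod.smul_fst, Prod.smul_snd, LinearMap.smul_comp, LinearMap.comp_smul,
        h1, h2, h3]

/-- `hom ρ ρ'` is the `k`-dimension of the space of morphisms of representations `ρ → ρ'`. -/
def hom (ρ ρ' : RepQ1 k) : ℕ := finrank k (homSpace ρ ρ')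

/-- The linear map `Φ` whose cokernel computes `Ext¹(ρ, ρ')`. -/
def phi (ρ ρ' : RepQ1 k) :
    ((ρ.V1 →ₗ[k] ρ'.V1) × (ρ.V2 →ₗ[k] ρ'.V2) × (ρ.V3 →ₗ[k] ρ'.V3)) →ₗ[k]
      ((ρ.V1 →ₗ[k] ρ'.V3) × (ρ.V1 →ₗ[k] ρ'.V2) × (ρ.V2 →ₗ[k] ρ'.V3)) where
  toFun g := (g.2.2 ∘ₗ ρ.r13 - ρ'.r13 ∘ₗ g.1,
              g.2.1 ∘ₗ ρ.r12 - ρ'.r12 ∘ₗ g.1,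
              g.2.2 ∘ₗ ρ.r23 - ρ'.r23 ∘ₗ g.2.1)
  map_add' g h := by
    refine Prod.ext ?_ (Prod.ext ?_ ?_) <;>
      · simp only [Prod.fst_add, Prod.snd_add, LinearMap.add_comp, LinearMap.comp_add]
        abel
  map_smul' c g := by
    refine Prod.ext ?_ (Prod.ext ?_ ?_) <;>
      simp [LinearMap.smul_comp, LinearMap.comp_smul, smul_sub]

/-- `ext1 ρ ρ'` is the `k`-dimension of the cokernel of `Φ`; it equals
`dim Ext¹(ρ, ρ')` in the abelian category of representations of `Q1`. -/
def ext1 (ρ ρ' : RepQ1 k) : ℕ :=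
  finrank k (((ρ.V1 →ₗ[k] ρ'.V3) × (ρ.V1 →ₗ[k] ρ'.V2) × (ρ.V2 →ₗ[k] ρ'.V3)) ⧸
    LinearMap.range (phi ρ ρ'))

/-- A representation is exceptional if `hom ρ ρ = 1` and `ext1 ρ ρ = 0`. -/
def IsExceptional (ρ : RepQ1 k) : Prop := hom ρ ρ = 1 ∧ ext1 ρ ρ = 0

/-- Isomorphism of representations of `Q1`. -/
def Iso (ρ ρ' : RepQ1 k) : Prop :=
  ∃ (e1 : ρ.V1 ≃ₗ[k] ρ'.V1) (e2 : ρ.V2 ≃ₗ[k] ρ'.V2) (e3 : ρ.V3 ≃ₗ[k] ρ'.V3),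
    e3.toLinearMap ∘ₗ ρ.r13 = ρ'.r13 ∘ₗ e1.toLinearMap ∧
    e2.toLinearMap ∘ₗ ρ.r12 = ρ'.r12 ∘ₗ e1.toLinearMap ∧
    e3.toLinearMap ∘ₗ ρ.r23 = ρ'.r23 ∘ₗ e2.toLinearMap

end RepQ1

variable (k : Type u) [Field k]

/-- `π₊^m : k^{m+1} → k^m`, `(a₁,…,a_{m+1}) ↦ (a₁,…,a_m)`. -/
def piPlus (m : ℕ) : (Fin (m + 1) → k) →ₗ[k] (Fin m → k) :=
  LinearMap.funLeft k k Fin.castSucc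

/-- `π₋^m : k^{m+1} → k^m`, `(a₁,…,a_{m+1}) ↦ (a₂,…,a_{m+1})`. -/
def piMinus (m : ℕ) : (Fin (m + 1) → k) →ₗ[k] (Fin m → k) :=
  LinearMap.funLeft k k Fin.succ

/-- `j₊^m : k^m → k^{m+1}`, `(a₁,…,a_m) ↦ (a₁,…,a_m,0)`. -/
def jPlus (m : ℕ) : (Fin m → k) →ₗ[k] (Fin (m + 1) → k) where
  toFun a := Fin.snoc a 0
  map_add' a b := by
    ext i
    induction i using Fin.lastCases <;> simp
  map_smul' c a := by
    ext i
    induction i using Fin.lastCases <;> simp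

/-- `j₋^m : k^m → k^{m+1}`, `(a₁,…,a_m) ↦ (0,a₁,…,a_m)`. -/
def jMinus (m : ℕ) : (Fin m → k) →ₗ[k] (Fin (m + 1) → k) where
  toFun a := Fin.cons 0 a
  map_add' a b := by
    ext i
    induction i using Fin.cases <;> simp
  map_smul' c a := by
    ext i
    induction i using Fin.cases <;> simp

/-- The representation `E₁^m = (k^{m+1}, k^m, k^m)` with `ρ₁₃ = π₊^m`, `ρ₁₂ = π₋^m`, `ρ₂₃ = id`. -/
def E1 (m : ℕ) : RepQ1 k where
  V1 := Fin (m + 1) → k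
  V2 := Fin m → k
  V3 := Fin m → k
  r13 := piPlus k m
  r12 := piMinus k m
  r23 := LinearMap.id

/-- The representation `E₂^m = (k^m, k^{m+1}, k^{m+1})` with `ρ₁₃ = j₊^m`, `ρ₁₂ = j₋^m`, `ρ₂₃ = id`. -/
def E2 (m : ℕ) : RepQ1 k where
  V1 := Fin m → k
  V2 := Fin (m + 1) → k
  V3 := Fin (m + 1) → k
  r13 := jPlus k m
  r12 := jMinus k m
  r23 := LinearMap.id

/-- The representation `E₃^m = (k^m, k^m, k^{m+1})` with `ρ₁₃ = j₊^m`, `ρ₁₂ = id`, `ρ₂₃ = j₋^m`. -/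
def E3 (m : ℕ) : RepQ1 k where
  V1 := Fin m → k
  V2 := Fin m → k
  V3 := Fin (m + 1) → k
  r13 := jPlus k m
  r12 := LinearMap.id
  r23 := jMinus k m

/-- The representation `E₄^m = (k^{m+1}, k^{m+1}, k^m)` with `ρ₁₃ = π₊^m`, `ρ₁₂ = id`, `ρ₂₃ = π₋^m`. -/
def E4 (m : ℕ) : RepQ1 k where
  V1 := Fin (m + 1) → k
  V2 := Fin (m + 1) → k
  V3 := Fin m → k
  r13 := piPlus k m
  r12 := LinearMap.id
  r23 := piMinus k m

/-- The representation `M = (0, k, 0)` with zero structure maps. -/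
def Mrep : RepQ1 k where
  V1 := Fin 0 → k
  V2 := Fin 1 → k
  V3 := Fin 0 → k
  r13 := 0
  r12 := 0
  r23 := 0

/-- The representation `M' = (k, 0, k)` with `ρ₁₃ = id` and the other structure maps zero. -/
def Mprep : RepQ1 k where
  V1 := Fin 1 → k
  V2 := Fin 0 → k
  V3 := Fin 1 → k
  r13 := LinearMap.id
  r12 := 0
  r23 := 0

namespace RepQ1

variable {k : Type u} [Field k]

/-- An exceptional pair `(X, Y)`: both `X` and `Y` are exceptional and
`hom (Y, X) = 0` and `ext1 (Y, X) = 0`. -/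
def IsExceptionalPair (X Y : RepQ1 k) : Prop :=
  X.IsExceptional ∧ Y.IsExceptional ∧ hom Y X = 0 ∧ ext1 Y X = 0

/-- An exceptional triple `(A, B, C)`: `(A,B)`, `(B,C)` and `(A,C)` are exceptional pairs. -/
def IsExceptionalTriple (A B C : RepQ1 k) : Prop :=
  IsExceptionalPair A B ∧ IsExceptionalPair B C ∧ IsExceptionalPair A C

/-- A morphism of representations of `Q1`. -/
structure Homo (ρ ρ' : RepQ1 k) where
  f1 : ρ.V1 →ₗ[k] ρ'.V1
  f2 : ρ.V2 →ₗ[k] ρ'.V2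
  f3 : ρ.V3 →ₗ[k] ρ'.V3
  comm13 : f3 ∘ₗ ρ.r13 = ρ'.r13 ∘ₗ f1
  comm12 : f2 ∘ₗ ρ.r12 = ρ'.r12 ∘ₗ f1
  comm23 : f3 ∘ₗ ρ.r23 = ρ'.r23 ∘ₗ f2

/-- `0 → A → C → B → 0` is a short exact sequence of representations of `Q1`:
at each vertex the induced sequence of vector spaces is short exact. -/
def IsSES {A C B : RepQ1 k} (f : Homo A C) (g : Homo C B) : Prop :=
  Function.Injective f.f1 ∧ Function.Injective f.f2 ∧ Function.Injective f.f3 ∧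
  Function.Surjective g.f1 ∧ Function.Surjective g.f2 ∧ Function.Surjective g.f3 ∧
  LinearMap.range f.f1 = LinearMap.ker g.f1 ∧
  LinearMap.range f.f2 = LinearMap.ker g.f2 ∧
  LinearMap.range f.f3 = LinearMap.ker g.f3

/-- A representation is zero when all its vector spaces are zero. -/
def IsZeroRep (ρ : RepQ1 k) : Prop :=
  Subsingleton ρ.V1 ∧ Subsingleton ρ.V2 ∧ Subsingleton ρ.V3

end RepQ1

/-- The (vertexwise) direct sum of two representations of `Q1`. -/
def RepQ1.dsum {k : Type u} [Field k] (ρ σ : RepQ1 k) : RepQ1 k where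
  V1 := ρ.V1 × σ.V1
  V2 := ρ.V2 × σ.V2
  V3 := ρ.V3 × σ.V3
  r13 := ρ.r13.prodMap σ.r13
  r12 := ρ.r12.prodMap σ.r12
  r23 := ρ.r23.prodMap σ.r23

/-!
Rank–nullity for `Φ` shows that `hom ρ ρ' - ext1 ρ ρ'` is the Euler form of `Q1` on the dimension
vectors, so it suffices to prove `hom (E₁^m, E₂^n) = 0` and that `Φ` is surjective for
`(E₂^n, E₁^m)`. A morphism `E₁^m → E₂^n` vanishes on the standard basis vectors one after another,
starting from `e₀ ∈ ker π₋` and using that `j₋` is injective. Dually, the equations for a preimage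
under `Φ` can be solved one basis vector at a time, because `π₊` is surjective.
-/

namespace RepQ1

variable {k : Type u} [Field k]

@[simp]
theorem phi_apply (ρ ρ' : RepQ1 k)
    (g : (ρ.V1 →ₗ[k] ρ'.V1) × (ρ.V2 →ₗ[k] ρ'.V2) × (ρ.V3 →ₗ[k] ρ'.V3)) :
    phi ρ ρ' g = (g.2.2 ∘ₗ ρ.r13 - ρ'.r13 ∘ₗ g.1, g.2.1 ∘ₗ ρ.r12 - ρ'.r12 ∘ₗ g.1,
      g.2.2 ∘ₗ ρ.r23 - ρ'.r23 ∘ₗ g.2.1) :=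
  rfl

theorem homSpace_eq_ker_phi (ρ ρ' : RepQ1 k) : homSpace ρ ρ' = LinearMap.ker (phi ρ ρ') := by
  ext f
  simp [homSpace, Prod.ext_iff, sub_eq_zero]

/-- `hom - ext1` is the Euler form of `Q1` evaluated at the dimension vectors. -/
theorem hom_sub_ext1 (ρ ρ' : RepQ1 k) :
    (hom ρ ρ' : ℤ) - ext1 ρ ρ' =
      finrank k ρ.V1 * finrank k ρ'.V1 + finrank k ρ.V2 * finrank k ρ'.V2 +
        finrank k ρ.V3 * finrank k ρ'.V3 -
      (finrank k ρ.V1 * finrank k ρ'.V3 + finrank k ρ.V1 * finrank k ρ'.V2 +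
        finrank k ρ.V2 * finrank k ρ'.V3) := by
  have rank_nullity := LinearMap.finrank_range_add_finrank_ker (phi ρ ρ')
  have coker := Submodule.finrank_quotient_add_finrank (LinearMap.range (phi ρ ρ'))
  rw [← homSpace_eq_ker_phi] at rank_nullity
  simp only [finrank_prod, finrank_linearMap] at rank_nullity coker
  rw [hom, ext1]
  zify at rank_nullity coker
  linear_combination rank_nullity - coker

end RepQ1

section

variable {k}

@[simp]
theorem piPlus_single_castSucc {m : ℕ} (i : Fin m) :
    piPlus k m (Pi.single i.castSucc 1) = Pi.single i 1 := by
  funext l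
  simp [piPlus, LinearMap.funLeft_apply, Pi.single_apply, Fin.castSucc_inj]

@[simp]
theorem piMinus_single_zero (m : ℕ) : piMinus k m (Pi.single 0 1) = 0 := by
  funext l
  simp [piMinus, LinearMap.funLeft_apply, Fin.succ_ne_zero]

@[simp]
theorem piMinus_single_succ {m : ℕ} (i : Fin m) :
    piMinus k m (Pi.single i.succ 1) = Pi.single i 1 := by
  funext l
  simp [piMinus, LinearMap.funLeft_apply, Pi.single_apply, Fin.succ_inj]

@[simp]
theorem jPlus_single {m : ℕ} (i : Fin m) : jPlus k m (Pi.single i 1) = Pi.single i.castSucc 1 := by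
  funext l
  induction l using Fin.lastCases with
  | last => simp [jPlus, (Fin.castSucc_lt_last i).ne']
  | cast j => simp [jPlus, Pi.single_apply, Fin.castSucc_inj]

@[simp]
theorem jMinus_single {m : ℕ} (i : Fin m) : jMinus k m (Pi.single i 1) = Pi.single i.succ 1 := by
  funext l
  induction l using Fin.cases with
  | zero => simp [jMinus, (Fin.succ_ne_zero i).symm]
  | succ j => simp [jMinus, Pi.single_apply, Fin.succ_inj]

theorem piPlus_surjective (m : ℕ) : Function.Surjective (piPlus k m) :=
  fun c => ⟨jPlus k m c, by funext l; simp [piPlus, jPlus, LinearMap.funLeft_apply]⟩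

theorem jMinus_injective (m : ℕ) : Function.Injective (jMinus k m) := by
  intro a b h
  funext l
  simpa [jMinus] using congrFun h l.succ

/-- Solved from left to right: surjectivity of `A` produces `d i` from `c i`, and `d i` then
determines `c (i+1)`. -/
theorem exists_zigzag_solution {P Q : Type*} [AddCommGroup Q] (A B : P → Q)
    (hA : Function.Surjective A) :
    ∀ {n : ℕ} (u v : Fin n → Q), ∃ (c : Fin (n + 1) → Q) (d : Fin n → P),
      ∀ i, c i.castSucc - A (d i) = u i ∧ c i.succ - B (d i) = v i
  | 0, _, _ => ⟨0, finZeroElim, fun i => i.elim0⟩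
  | n + 1, u, v => by
    obtain ⟨c, d, h⟩ := exists_zigzag_solution A B hA (Fin.init u) (Fin.init v)
    obtain ⟨p, hp⟩ := hA (c (Fin.last n) - u (Fin.last n))
    refine ⟨Fin.snoc c (v (Fin.last n) + B p), Fin.snoc d p, fun i => ?_⟩
    induction i using Fin.lastCases with
    | last => simp [hp, sub_sub_cancel]
    | cast i =>
      simp only [Fin.snoc_castSucc, Fin.succ_castSucc]
      exact h i

theorem eq_zero_of_comp_piPlus_of_comp_piMinus {m n : ℕ}
    {f : (Fin m → k) →ₗ[k] (Fin (n + 1) → k)} {g : (Fin (m + 1) → k) →ₗ[k] (Fin n → k)}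
    (hPlus : f ∘ₗ piPlus k m = jPlus k n ∘ₗ g) (hMinus : f ∘ₗ piMinus k m = jMinus k n ∘ₗ g) :
    g = 0 ∧ f = 0 := by
  have plus (x) : f (piPlus k m x) = jPlus k n (g x) := LinearMap.congr_fun hPlus x
  have minus (x) : f (piMinus k m x) = jMinus k n (g x) := LinearMap.congr_fun hMinus x
  have hg (j : Fin (m + 1)) : g (Pi.single j 1) = 0 := by
    induction j using Fin.induction with
    | zero => exact jMinus_injective n (by rw [← minus, piMinus_single_zero, map_zero, map_zero])
    | succ i ih =>
      apply jMinus_injective n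
      rw [← minus, piMinus_single_succ, ← piPlus_single_castSucc, plus, ih, map_zero, map_zero]
  have hg' : g = 0 := (Pi.basisFun k _).ext fun j => by simpa using hg j
  refine ⟨hg', (Pi.basisFun k _).ext fun j => ?_⟩
  rw [Pi.basisFun_apply, ← piMinus_single_succ, minus, hg', LinearMap.zero_apply, map_zero,
    LinearMap.zero_apply]

theorem homSpace_E1_E2_eq_bot (m n : ℕ) : RepQ1.homSpace (E1 k m) (E2 k n) = ⊥ := by
  rw [Submodule.eq_bot_iff]
  rintro ⟨f1, f2, f3⟩ ⟨h13, h12, h23⟩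
  have hf3 : f3 = f2 := h23
  subst hf3
  obtain ⟨rfl, rfl⟩ := eq_zero_of_comp_piPlus_of_comp_piMinus h13 h12
  rfl

theorem exists_zigzag_linearMap {m n : ℕ} (u v : (Fin n → k) →ₗ[k] (Fin m → k)) :
    ∃ (g : (Fin n → k) →ₗ[k] (Fin (m + 1) → k)) (f : (Fin (n + 1) → k) →ₗ[k] (Fin m → k)),
      f ∘ₗ jPlus k n - piPlus k m ∘ₗ g = u ∧ f ∘ₗ jMinus k n - piMinus k m ∘ₗ g = v := by
  obtain ⟨c, d, h⟩ := exists_zigzag_solution (piPlus k m) (piMinus k m) (piPlus_surjective m)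
    (fun i => u (Pi.single i 1)) (fun i => v (Pi.single i 1))
  refine ⟨Fintype.linearCombination k d, Fintype.linearCombination k c,
    (Pi.basisFun k _).ext fun i => ?_, (Pi.basisFun k _).ext fun i => ?_⟩
  · simpa [Fintype.linearCombination_apply_single] using (h i).1
  · simpa [Fintype.linearCombination_apply_single] using (h i).2

theorem phi_E2_E1_surjective (m n : ℕ) :
    Function.Surjective (RepQ1.phi (E2 k n) (E1 k m)) := by
  rintro ⟨(u : (Fin n → k) →ₗ[k] (Fin m → k)), (v : (Fin n → k) →ₗ[k] (Fin m → k)),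
    (w : (Fin (n + 1) → k) →ₗ[k] (Fin m → k))⟩
  obtain ⟨g, f, hPlus, hMinus⟩ := exists_zigzag_linearMap (u - w ∘ₗ jPlus k n) v
  refine ⟨(g, f, f + w), ?_⟩
  refine Prod.ext ?_ (Prod.ext hMinus ?_)
  · change (f + w) ∘ₗ jPlus k n - piPlus k m ∘ₗ g = u
    rw [LinearMap.add_comp, add_sub_right_comm, hPlus, sub_add_cancel]
  · change (f + w) ∘ₗ LinearMap.id - LinearMap.id ∘ₗ f = w
    simp

@[simp] theorem finrank_E1_V1 (m : ℕ) : finrank k (E1 k m).V1 = m + 1 := finrank_fin_fun k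
@[simp] theorem finrank_E1_V2 (m : ℕ) : finrank k (E1 k m).V2 = m := finrank_fin_fun k
@[simp] theorem finrank_E1_V3 (m : ℕ) : finrank k (E1 k m).V3 = m := finrank_fin_fun k
@[simp] theorem finrank_E2_V1 (m : ℕ) : finrank k (E2 k m).V1 = m := finrank_fin_fun k
@[simp] theorem finrank_E2_V2 (m : ℕ) : finrank k (E2 k m).V2 = m + 1 := finrank_fin_fun k
@[simp] theorem finrank_E2_V3 (m : ℕ) : finrank k (E2 k m).V3 = m + 1 := finrank_fin_fun k

end

theorem statement_3_general (k : Type u) [Field k] (m n : ℕ) :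
    RepQ1.hom (E1 k m) (E2 k n) = 0 ∧
    RepQ1.ext1 (E1 k m) (E2 k n) = n + m + 2 ∧
    RepQ1.hom (E2 k n) (E1 k m) = n + m ∧
    RepQ1.ext1 (E2 k n) (E1 k m) = 0 := by
  have hom12 : RepQ1.hom (E1 k m) (E2 k n) = 0 := by
    rw [RepQ1.hom, homSpace_E1_E2_eq_bot, finrank_bot]
  have ext21 : RepQ1.ext1 (E2 k n) (E1 k m) = 0 := by
    rw [RepQ1.ext1, LinearMap.range_eq_top.mpr (phi_E2_E1_surjective m n)]
    exact finrank_zero_of_subsingleton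
  have euler12 := RepQ1.hom_sub_ext1 (E1 k m) (E2 k n)
  have euler21 := RepQ1.hom_sub_ext1 (E2 k n) (E1 k m)
  simp only [finrank_E1_V1, finrank_E1_V2, finrank_E1_V3, finrank_E2_V1, finrank_E2_V2,
    finrank_E2_V3, hom12, ext21] at euler12 euler21
  push_cast at euler12 euler21
  refine ⟨hom12, ?_, ?_, ext21⟩ <;> zify
  · linear_combination -euler12
  · linear_combination euler21

/-- `hom`/`ext1` dimensions between `E₁^m` and `E₂^n`. -/
theorem statement_3 (k : Type u) [Field k] [IsAlgClosed k] (m n : ℕ) :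
    RepQ1.hom (E1 k m) (E2 k n) = 0 ∧
    RepQ1.ext1 (E1 k m) (E2 k n) = n + m + 2 ∧
    RepQ1.hom (E2 k n) (E1 k m) = n + m ∧
    RepQ1.ext1 (E2 k n) (E1 k m) = 0 :=
  statement_3_general k m n
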